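/- arXiv:1310.5646 — 3 statements merged into one kernel-verified Lean document; each statement's English description precedes it below -/
import Mathlib

section
/- Let a,b,c,u,v be complex numbers. The set {(i,j,k) ∈ ℕ³ : 2i+j+k = 2a+b+c-u and i+j = a+b-v} is nonempty if and only if a+c-u+v ∈ ℕ and a+b-v ∈ ℕ, and in that case its cardinality equals 1 + min{a+c-u+v, a+b-v}. -/
/-- For complex numbers `a b c u v`, the set
`{(i,j,k) ∈ ℕ³ : 2i+j+k = 2a+b+c-u ∧ i+j = a+b-v}` is nonempty iff
`a+c-u+v ∈ ℕ` and `a+b-v ∈ ℕ`, in which case its cardinality is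
`1 + min (a+c-u+v) (a+b-v)`. -/
theorem stmt0 (a b c u v : ℂ)
    (S : Set (ℕ × ℕ × ℕ))
    (hS : S = {t : ℕ × ℕ × ℕ |
      (2 * (t.1 : ℂ) + (t.2.1 : ℂ) + (t.2.2 : ℂ) = 2 * a + b + c - u) ∧
      ((t.1 : ℂ) + (t.2.1 : ℂ) = a + b - v)}) :
    (S.Nonempty ↔ (∃ m : ℕ, a + c - u + v = (m : ℂ)) ∧ (∃ n : ℕ, a + b - v = (n : ℂ))) ∧
    (∀ m n : ℕ, a + c - u + v = (m : ℂ) → a + b - v = (n : ℂ) →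
      S.ncard = 1 + min m n) := by
  subst hS
  constructor
  · constructor
    · rintro ⟨⟨i, j, k⟩, h1, h2⟩
      simp only [Set.mem_setOf_eq] at h1 h2
      refine ⟨⟨i + k, ?_⟩, ⟨i + j, ?_⟩⟩
      · push_cast
        linear_combination h2 - h1
      · push_cast
        linear_combination -h2
    · rintro ⟨⟨m, hm⟩, ⟨n, hn⟩⟩
      refine ⟨(0, n, m), ?_, ?_⟩ <;> simp only [Set.mem_setOf_eq] <;> push_cast
      · linear_combination -hm - hn
      · linear_combination -hn
  · intro m n hm hn
    have key : {t : ℕ × ℕ × ℕ |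
        (2 * (t.1 : ℂ) + (t.2.1 : ℂ) + (t.2.2 : ℂ) = 2 * a + b + c - u) ∧
        ((t.1 : ℂ) + (t.2.1 : ℂ) = a + b - v)} =
        ↑(Finset.image (fun i => (i, n - i, m - i)) (Finset.range (min m n + 1))) := by
      ext ⟨i, j, k⟩
      simp only [Set.mem_setOf_eq, Finset.coe_image, Set.mem_image, Finset.mem_coe,
        Finset.mem_range, Nat.lt_succ_iff]
      constructor
      · rintro ⟨h1, h2⟩
        have hij : (i + j : ℂ) = n := by linear_combination h2 + hn
        have hik : (i + k : ℂ) = m := by linear_combination h1 - h2 + hm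
        have hijn : i + j = n := by exact_mod_cast hij
        have hikn : i + k = m := by exact_mod_cast hik
        refine ⟨i, by omega, ?_⟩
        simp only [Prod.mk.injEq]
        exact ⟨trivial, by omega, by omega⟩
      · rintro ⟨x, hx, heq⟩
        simp only [Prod.mk.injEq] at heq
        obtain ⟨rfl, rfl, rfl⟩ := heq
        have hxm : x ≤ m := by omega
        have hxn : x ≤ n := by omega
        constructor
        · push_cast [Nat.cast_sub hxm, Nat.cast_sub hxn]
          linear_combination -hm - hn
        · push_cast [Nat.cast_sub hxn]
          linear_combination -hn
    rw [key, Set.ncard_coe_finset,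
      Finset.card_image_of_injective _ (fun x y h => congrArg Prod.fst h),
      Finset.card_range]
    omega
end

section
/- Let a,b,c,u,v be complex numbers with b-c ∈ ℕ and 2v-u ∈ ℕ. The set S = {(i,j) ∈ ℕ² : |b-c+u-2v| ≤ i ≤ b-c-u+2v, b-c+u-2v+i ≡ 0 (mod 2), and i+2j = 2a+b+c-u} is nonempty if and only if 2a+b+c-u ∈ ℕ, a+c-u+v ∈ ℤ, and |b-c+u-2v| ≤ 2a+b+c-u. In that case, Card S = 1 + (min{2a+b+c-u, b-c-u+2v} - |b-c+u-2v|)/2. -/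
/-- (Lemma 4.4 combinatorics.) With `b-c = p ∈ ℕ` and `2v-u = q ∈ ℕ`,
the set `S = {(i,j) ∈ ℕ² : |b-c+u-2v| ≤ i ≤ b-c-u+2v, b-c+u-2v+i even, i+2j = 2a+b+c-u}`
is nonempty iff `2a+b+c-u ∈ ℕ`, `a+c-u+v ∈ ℤ` and `|b-c+u-2v| ≤ 2a+b+c-u`; and then
`Card S = 1 + (min (2a+b+c-u) (b-c-u+2v) - |b-c+u-2v|)/2`. -/
theorem stmt1 (a b c u v : ℂ) (p q : ℕ)
    (hp : b - c = (p : ℂ)) (hq : 2 * v - u = (q : ℂ))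
    (S : Set (ℕ × ℕ))
    (hS : S = {t : ℕ × ℕ |
      |(p : ℤ) - (q : ℤ)| ≤ (t.1 : ℤ) ∧ (t.1 : ℤ) ≤ (p : ℤ) + (q : ℤ) ∧
      ((p : ℤ) - (q : ℤ) + (t.1 : ℤ)) % 2 = 0 ∧
      ((t.1 : ℂ) + 2 * (t.2 : ℂ) = 2 * a + b + c - u)}) :
    (S.Nonempty ↔
      (∃ n : ℕ, 2 * a + b + c - u = (n : ℂ) ∧ |(p : ℤ) - (q : ℤ)| ≤ (n : ℤ)) ∧
      (∃ z : ℤ, a + c - u + v = (z : ℂ))) ∧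
    (S.Nonempty → ∀ n : ℕ, 2 * a + b + c - u = (n : ℂ) →
      (S.ncard : ℤ) = 1 + (min (n : ℤ) ((p : ℤ) + (q : ℤ)) - |(p : ℤ) - (q : ℤ)|) / 2) := by
  subst hS
  obtain ⟨e, he⟩ : ∃ e : ℕ, |(p:ℤ) - (q:ℤ)| = (e : ℤ) :=
    ⟨(|(p:ℤ) - (q:ℤ)|).toNat, (Int.toNat_of_nonneg (abs_nonneg _)).symm⟩
  have he2 : (e:ℤ) = (p:ℤ) - (q:ℤ) ∨ (e:ℤ) = (q:ℤ) - (p:ℤ) := by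
    rcases abs_choice ((p:ℤ) - (q:ℤ)) with h | h
    · left; rw [← he]; exact h
    · right; rw [← he, h]; ring
  rw [he]
  constructor
  · constructor
    · rintro ⟨⟨i, j⟩, h1, h2, h3, h4⟩
      simp only at h1 h2 h3 h4
      refine ⟨⟨i + 2 * j, ?_, ?_⟩,
        ⟨((i:ℤ) + 2*(j:ℤ) - (p:ℤ) + (q:ℤ))/2, ?_⟩⟩
      · push_cast; linear_combination -h4
      · push_cast; omega
      · have h2z : (2:ℤ) * (((i:ℤ) + 2*(j:ℤ) - (p:ℤ) + (q:ℤ))/2)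
            = (i:ℤ) + 2*(j:ℤ) - (p:ℤ) + (q:ℤ) := by omega
        have hcast := congrArg (Int.cast : ℤ → ℂ) h2z
        push_cast at hcast
        refine mul_left_cancel₀ (two_ne_zero (α := ℂ)) ?_
        linear_combination -h4 - hp + hq - hcast
    · rintro ⟨⟨n, hn, hle⟩, ⟨z, hz⟩⟩
      have hzc : ((2*z : ℤ):ℂ) = ((n:ℤ):ℂ) - (p:ℤ) + (q:ℤ) := by
        push_cast
        linear_combination -2*hz + hn - hp + hq
      have h2z : 2*z = (n:ℤ) - (p:ℤ) + (q:ℤ) := by exact_mod_cast hzc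
      have hnat : e + 2 * ((n - e)/2) = n := by
        rcases he2 with h | h <;> omega
      refine ⟨(e, (n - e)/2), ?_, ?_, ?_, ?_⟩
      · simp only []; exact_mod_cast le_refl (e:ℤ)
      · simp only []; rcases he2 with h | h <;> omega
      · simp only []; rcases he2 with h | h <;> omega
      · simp only []
        rw [hn]
        exact_mod_cast congrArg (Nat.cast (R := ℂ)) hnat
  · rintro ⟨⟨i, j⟩, h1, h2, h3, h4⟩ n hn
    simp only at h1 h2 h3 h4
    have hij : i + 2*j = n := by
      have : ((i:ℂ) + 2*(j:ℂ)) = (n:ℂ) := h4.trans hn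
      exact_mod_cast this
    set M : ℕ := min n (p + q) with hM
    set N : ℕ := (M - e)/2 with hN
    have hinj : Function.Injective (fun k : ℕ => ((e + 2*k, (n - e)/2 - k) : ℕ × ℕ)) := by
      intro k k' hk
      have := congrArg Prod.fst hk
      simp only at this
      omega
    have hset : {t : ℕ × ℕ |
        (e:ℤ) ≤ (t.1 : ℤ) ∧ (t.1 : ℤ) ≤ (p : ℤ) + (q : ℤ) ∧
        ((p : ℤ) - (q : ℤ) + (t.1 : ℤ)) % 2 = 0 ∧
        ((t.1 : ℂ) + 2 * (t.2 : ℂ) = 2 * a + b + c - u)} =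
        ↑((Finset.range (N+1)).image
          (fun k : ℕ => ((e + 2*k, (n - e)/2 - k) : ℕ × ℕ))) := by
      ext ⟨x, y⟩
      simp only [Set.mem_setOf_eq, Finset.coe_image, Set.mem_image, Finset.mem_coe,
        Finset.mem_range, Prod.mk.injEq]
      constructor
      · rintro ⟨g1, g2, g3, g4⟩
        have gxy : x + 2*y = n := by
          have : ((x:ℂ) + 2*(y:ℂ)) = (n:ℂ) := g4.trans hn
          exact_mod_cast this
        refine ⟨(x - e)/2, ?_, ?_, ?_⟩
        · rcases he2 with h | h <;> omega
        · rcases he2 with h | h <;> omega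
        · rcases he2 with h | h <;> omega
      · rintro ⟨k, hk, hfst, hsnd⟩
        subst hfst hsnd
        have hen : e ≤ n := by omega
        have hnk : (e + 2*k) + 2*((n - e)/2 - k) = n := by
          rcases he2 with h | h <;> omega
        refine ⟨?_, ?_, ?_, ?_⟩
        · push_cast; omega
        · rcases he2 with h | h <;> push_cast <;> omega
        · rcases he2 with h | h <;> push_cast <;> omega
        · rw [hn]
          exact_mod_cast congrArg (Nat.cast (R := ℂ)) hnk
    rw [hset, Set.ncard_coe_finset, Finset.card_image_of_injective _ hinj,
      Finset.card_range]
    have hen : e ≤ n := by omega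
    push_cast
    rcases he2 with h | h <;> omega
end

section
/- Let H ∈ 𝔥_{𝔤₂} ⊂ so(7,ℂ) be the element H = 4H_{α₁}+7H_{α₂} = 4H₁+3H₂+H₃. Then (ε₁-ε₂)(H) = 1 > 0, (ε₂-ε₃)(H) = 2 > 0, and ε₃(H) = 1 > 0; consequently the parabolic 𝔭(H) defined by the nonnegative eigenspaces of ad(H) equals the standard Borel subalgebra of so(7,ℂ), so the Borel subalgebra of so(7,ℂ) is 𝔤₂-compatible. -/
open Matrix

/-- The matrix of the quadratic form `2(z₁z₄ + z₂z₅ + z₃z₆) + z₇²` on `ℂ⁷`. -/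
def so7Form : Matrix (Fin 7) (Fin 7) ℂ := Matrix.of fun i j =>
  if ((i : ℕ) < 3 ∧ (j : ℕ) = (i : ℕ) + 3) ∨ ((j : ℕ) < 3 ∧ (i : ℕ) = (j : ℕ) + 3) ∨
     ((i : ℕ) = 6 ∧ (j : ℕ) = 6) then 1 else 0

/-- `so(7,ℂ)` realized as the skew-adjoint matrices for `so7Form`. -/
def so7 : Set (Matrix (Fin 7) (Fin 7) ℂ) :=
  {M | Mᵀ * so7Form + so7Form * M = 0}

/-- The adjoint action `ad(H) : M ↦ HM - MH` on `7×7` matrices. -/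
noncomputable def adMat (H : Matrix (Fin 7) (Fin 7) ℂ) :
    Module.End ℂ (Matrix (Fin 7) (Fin 7) ℂ) :=
  LinearMap.mulLeft ℂ H - LinearMap.mulRight ℂ H

/-- The parabolic subalgebra `𝔭(H)` of `so(7,ℂ)` attached to a hyperbolic element `H`:
the part of `so(7,ℂ)` lying in the sum of the eigenspaces of `ad(H)` with nonnegative
eigenvalue. -/
noncomputable def pMat (H : Matrix (Fin 7) (Fin 7) ℂ) : Set (Matrix (Fin 7) (Fin 7) ℂ) :=
  {M | M ∈ so7 ∧
    M ∈ ⨆ c : {r : ℝ // 0 ≤ r}, Module.End.eigenspace (adMat H) ((c : ℝ) : ℂ)}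

/-- The matrix positions carrying the negative root spaces of `so(7,ℂ)` (w.r.t. the
positive system `{εᵢ ± εⱼ (i<j), εₖ}`). -/
def negPos (i j : Fin 7) : Prop :=
  ((i : ℕ) < 3 ∧ (j : ℕ) < 3 ∧ (j : ℕ) < (i : ℕ)) ∨
  (3 ≤ (i : ℕ) ∧ (i : ℕ) < 6 ∧ 3 ≤ (j : ℕ) ∧ (j : ℕ) < 6 ∧ (i : ℕ) < (j : ℕ)) ∨
  (3 ≤ (i : ℕ) ∧ (i : ℕ) < 6 ∧ (j : ℕ) < 3) ∨
  (3 ≤ (i : ℕ) ∧ (i : ℕ) < 6 ∧ (j : ℕ) = 6) ∨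
  ((i : ℕ) = 6 ∧ (j : ℕ) < 3)

/-- The standard Borel subalgebra of `so(7,ℂ)`: the Cartan plus the positive root
spaces, i.e. those elements of `so(7,ℂ)` vanishing on all negative root positions. -/
def so7Borel : Set (Matrix (Fin 7) (Fin 7) ℂ) :=
  {M | M ∈ so7 ∧ ∀ i j, negPos i j → M i j = 0}

/-- `H_{α₁} = H₁ - H₂ + 2H₃`, where `Hᵢ = Eᵢᵢ - E_{i+3,i+3}`. -/
noncomputable def HA1 : Matrix (Fin 7) (Fin 7) ℂ := Matrix.diagonal ![1, -1, 2, -1, 1, -2, 0]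

/-- `H_{α₂} = H₂ - H₃`. -/
noncomputable def HA2 : Matrix (Fin 7) (Fin 7) ℂ := Matrix.diagonal ![0, 1, -1, 0, -1, 1, 0]

/-! `H = diag(4, 3, 1, -4, -3, -1, 0)` is diagonal, so `ad H` multiplies the matrix unit `Eᵢⱼ` by
`εᵢ(H) - εⱼ(H)`. Hence a matrix lies in the sum of the eigenspaces of `ad H` with nonnegative
eigenvalue exactly when it vanishes at the positions where `εᵢ(H) < εⱼ(H)`, and for this `H`
those are precisely the negative root positions. -/

section DiagonalAd

variable {K n : Type*} [Field K] [Fintype n] [DecidableEq n]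

theorem ad_diagonal_apply (d : n → K) (M : Matrix n n K) (i j : n) :
    (LinearMap.mulLeft K (diagonal d) - LinearMap.mulRight K (diagonal d)) M i j =
      (d i - d j) * M i j := by
  simp only [LinearMap.sub_apply, LinearMap.mulLeft_apply, LinearMap.mulRight_apply,
    Matrix.sub_apply, diagonal_mul, mul_diagonal]
  ring

theorem single_mem_eigenspace_ad_diagonal (d : n → K) (i j : n) (x : K) :
    single i j x ∈ Module.End.eigenspace
      (LinearMap.mulLeft K (diagonal d) - LinearMap.mulRight K (diagonal d)) (d i - d j) := by
  rw [Module.End.mem_eigenspace_iff]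
  ext a b
  rw [ad_diagonal_apply, Matrix.smul_apply, smul_eq_mul]
  by_cases h : i = a ∧ j = b
  · obtain ⟨rfl, rfl⟩ := h
    rfl
  · simp [single, h]

theorem mem_iSup_eigenspace_ad_diagonal_iff {ι : Type*} (d : n → K) (f : ι → K)
    (M : Matrix n n K) :
    M ∈ ⨆ c, Module.End.eigenspace
        (LinearMap.mulLeft K (diagonal d) - LinearMap.mulRight K (diagonal d)) (f c) ↔
      ∀ i j, d i - d j ∉ Set.range f → M i j = 0 := by
  constructor
  · intro hM
    refine Submodule.iSup_induction _
      (motive := fun M => ∀ i j, d i - d j ∉ Set.range f → M i j = 0) hM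
      (fun c N hN i j hij => ?_) (fun _ _ _ => rfl) (fun N N' hN hN' i j hij => ?_)
    · rw [Module.End.mem_eigenspace_iff] at hN
      have hentry := congrFun (congrFun hN i) j
      rw [ad_diagonal_apply, Matrix.smul_apply, smul_eq_mul] at hentry
      by_contra hne
      exact hij ⟨c, (mul_right_cancel₀ hne hentry).symm⟩
    · rw [Matrix.add_apply, hN i j hij, hN' i j hij, add_zero]
  · intro hM
    rw [matrix_eq_sum_single M]
    refine Submodule.sum_mem _ fun i _ => Submodule.sum_mem _ fun j _ => ?_
    by_cases hij : d i - d j ∈ Set.range f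
    · obtain ⟨c, hc⟩ := hij
      refine Submodule.mem_iSup_of_mem c ?_
      rw [hc]
      exact single_mem_eigenspace_ad_diagonal d i j (M i j)
    · rw [hM i j hij, single_zero]
      exact Submodule.zero_mem _

end DiagonalAd

open scoped ComplexOrder in
theorem Complex.mem_range_ofReal_nonneg_iff (z : ℂ) :
    z ∈ Set.range (fun c : {r : ℝ // 0 ≤ r} => ((c : ℝ) : ℂ)) ↔ 0 ≤ z := by
  constructor
  · rintro ⟨c, rfl⟩
    exact Complex.zero_le_real.2 c.2
  · intro hz
    have hz_real : z = z.re := Complex.eq_re_of_ofReal_le (r := 0) (by simpa using hz)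
    exact ⟨⟨z.re, (Complex.nonneg_iff.1 hz).1⟩, hz_real.symm⟩

-- The diagonal of `H = 4H₁ + 3H₂ + H₃`, taken in `ℤ` so that comparing its entries is decidable.
def so7StdWeights : Fin 7 → ℤ := ![4, 3, 1, -4, -3, -1, 0]

theorem negPos_iff_so7StdWeights_lt (i j : Fin 7) :
    negPos i j ↔ so7StdWeights i < so7StdWeights j := by
  revert i j
  unfold negPos so7StdWeights
  decide

theorem diagonal_eq_so7StdWeights :
    (diagonal ![4, 3, 1, -4, -3, -1, 0] : Matrix (Fin 7) (Fin 7) ℂ) =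
      diagonal fun i => (so7StdWeights i : ℂ) := by
  congr 1
  funext i
  fin_cases i <;> simp [so7StdWeights]

open scoped ComplexOrder in
theorem pMat_diagonal_so7StdWeights :
    pMat (diagonal ![4, 3, 1, -4, -3, -1, 0]) = so7Borel := by
  ext M
  refine and_congr_right fun _ => ?_
  rw [diagonal_eq_so7StdWeights, adMat, mem_iSup_eigenspace_ad_diagonal_iff]
  refine forall₂_congr fun i j => ?_
  rw [Complex.mem_range_ofReal_nonneg_iff, sub_nonneg, Int.cast_le, not_le,
    negPos_iff_so7StdWeights_lt]

/-- For `H = 4H_{α₁} + 7H_{α₂} = 4H₁ + 3H₂ + H₃ ∈ 𝔥_{𝔤₂}` one has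
`(ε₁-ε₂)(H) = 1 > 0`, `(ε₂-ε₃)(H) = 2 > 0`, `ε₃(H) = 1 > 0`, and the parabolic `𝔭(H)`
determined by the nonnegative eigenspaces of `ad(H)` is exactly the standard Borel
subalgebra of `so(7,ℂ)`; hence the Borel subalgebra of `so(7,ℂ)` is `𝔤₂`-compatible. -/
theorem stmt6 (H : Matrix (Fin 7) (Fin 7) ℂ)
    (hH : H = 4 • HA1 + 7 • HA2) :
    H = Matrix.diagonal ![4, 3, 1, -4, -3, -1, 0] ∧
    H 0 0 - H 1 1 = 1 ∧ (0 : ℝ) < 1 ∧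
    H 1 1 - H 2 2 = 2 ∧ (0 : ℝ) < 2 ∧
    H 2 2 = 1 ∧
    pMat H = so7Borel := by
  have hHd : H = diagonal ![4, 3, 1, -4, -3, -1, 0] := by
    rw [hH, HA1, HA2, ← diagonal_smul, ← diagonal_smul, diagonal_add]
    congr 1
    funext i
    fin_cases i <;> norm_num
  subst hHd
  refine ⟨rfl, ?_, one_pos, ?_, two_pos, ?_, pMat_diagonal_so7StdWeights⟩ <;>
    norm_num [cons_val_two, vecHead, vecTail]
end
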